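/- arXiv:math/0304085 — 5 statements merged into one kernel-verified Lean document; each statement's English description precedes it below -/
import Mathlib

section
/- For positive integers m, n with m, n ≥ 2, the product of multiple zeta values satisfies the harmonic product formula: ζ(m)·ζ(n) = ζ(m,n) + ζ(n,m) + ζ(m+n). -/
/-- The Riemann zeta value `ζ(k) = Σ_{n ≥ 1} 1/n^k`. -/
noncomputable def zetaVal (k : ℕ) : ℝ := ∑' n : ℕ, (1 : ℝ) / ((n : ℝ) + 1) ^ k

/-- The double zeta value `ζ(k₁,k₂) = Σ_{0 < n₁ < n₂} 1/(n₁^{k₁} n₂^{k₂})`. -/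
noncomputable def doubleZetaVal (k₁ k₂ : ℕ) : ℝ :=
  ∑' q : {q : ℕ × ℕ // 0 < q.1 ∧ q.1 < q.2},
    (1 : ℝ) / ((q.1.1 : ℝ) ^ k₁ * (q.1.2 : ℝ) ^ k₂)

lemma summable_aux {k : ℕ} (hk : 2 ≤ k) :
    Summable (fun i : ℕ => (1 : ℝ) / ((i : ℝ) + 1) ^ k) := by
  have h := (summable_nat_add_iff 1).mpr ((Real.summable_one_div_nat_pow (p := k)).mpr (by omega))
  convert h using 2 with i
  · rfl
  push_cast
  ring

/-- harmonic product formula `ζ(m)·ζ(n) = ζ(m,n) + ζ(n,m) + ζ(m+n)`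
for `m, n ≥ 2`. -/
theorem harmonic_product (m n : ℕ) (hm : 2 ≤ m) (hn : 2 ≤ n) :
    zetaVal m * zetaVal n = doubleZetaVal m n + doubleZetaVal n m + zetaVal (m + n) := by
  set a : ℕ → ℝ := fun i => (1 : ℝ) / ((i : ℝ) + 1) ^ m with ha_def
  set b : ℕ → ℝ := fun j => (1 : ℝ) / ((j : ℝ) + 1) ^ n with hb_def
  have ha : Summable a := summable_aux hm
  have hb : Summable b := summable_aux hn
  set F : ℕ × ℕ → ℝ := fun p => a p.1 * b p.2 with hF_def
  have hF : Summable F :=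
    ha.mul_of_nonneg hb (fun i => by positivity) (fun j => by positivity)
  have hprod : zetaVal m * zetaVal n = ∑' p : ℕ × ℕ, F p := Summable.tsum_mul_tsum ha hb hF
  -- sets
  set S : Set (ℕ × ℕ) := {p | p.1 < p.2} with hS_def
  set T : Set (ℕ × ℕ) := {p | p.2 < p.1} with hT_def
  set D : Set (ℕ × ℕ) := {p | p.1 = p.2} with hD_def
  have hcompl : Sᶜ = T ∪ D := by
    ext p
    simp only [hS_def, hT_def, hD_def, Set.mem_compl_iff, Set.mem_union, Set.mem_setOf_eq]
    omega
  have hsplit : (∑' p : ℕ × ℕ, F p) = (∑' p : S, F p) + ((∑' p : T, F p) + (∑' p : D, F p)) := by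
    rw [← Summable.tsum_subtype_add_tsum_subtype_compl hF S, hcompl,
      Summable.tsum_union_disjoint (f := F) (s := T) (t := D) ?_ (hF.subtype T) (hF.subtype D)]
    · intro p hp hq
      simp only [hT_def, hD_def, Set.le_eq_subset, Set.bot_eq_empty] at *
      rintro x hx
      have h1 := hp hx
      have h2 := hq hx
      simp only [Set.mem_setOf_eq] at h1 h2
      omega
  -- S part
  have hSzeta : (∑' p : S, F p) = doubleZetaVal m n := by
    let e : S ≃ {q : ℕ × ℕ // 0 < q.1 ∧ q.1 < q.2} :=
      { toFun := fun p => ⟨(p.1.1 + 1, p.1.2 + 1), by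
          have := p.2; simp only [hS_def, Set.mem_setOf_eq] at this; omega⟩
        invFun := fun q => ⟨(q.1.1 - 1, q.1.2 - 1), by
          have := q.2; simp only [hS_def, Set.mem_setOf_eq]; omega⟩
        left_inv := fun p => by
          have := p.2; simp only [hS_def, Set.mem_setOf_eq] at this
          ext <;> simp
        right_inv := fun q => by
          have := q.2
          ext <;> simp <;> omega }
    rw [doubleZetaVal, ← e.tsum_eq]
    apply tsum_congr
    intro p
    simp only [e, Equiv.coe_fn_mk, hF_def, ha_def, hb_def]
    push_cast
    rw [div_mul_div_comm, one_mul]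
  -- T part
  have hTzeta : (∑' p : T, F p) = doubleZetaVal n m := by
    let e : T ≃ {q : ℕ × ℕ // 0 < q.1 ∧ q.1 < q.2} :=
      { toFun := fun p => ⟨(p.1.2 + 1, p.1.1 + 1), by
          have := p.2; simp only [hT_def, Set.mem_setOf_eq] at this; omega⟩
        invFun := fun q => ⟨(q.1.2 - 1, q.1.1 - 1), by
          have := q.2; simp only [hT_def, Set.mem_setOf_eq]; omega⟩
        left_inv := fun p => by
          have := p.2; simp only [hT_def, Set.mem_setOf_eq] at this
          ext <;> simp
        right_inv := fun q => by
          have := q.2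
          ext <;> simp <;> omega }
    rw [doubleZetaVal, ← e.tsum_eq]
    apply tsum_congr
    intro p
    simp only [e, Equiv.coe_fn_mk, hF_def, ha_def, hb_def]
    push_cast
    rw [div_mul_div_comm, one_mul, mul_comm]
  -- D part
  have hDzeta : (∑' p : D, F p) = zetaVal (m + n) := by
    let e : ℕ ≃ D :=
      { toFun := fun i => ⟨(i, i), rfl⟩
        invFun := fun p => p.1.1
        left_inv := fun i => rfl
        right_inv := fun p => by
          have := p.2; simp only [hD_def, Set.mem_setOf_eq] at this
          ext <;> simp [this] }
    rw [zetaVal, ← e.tsum_eq]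
    apply tsum_congr
    intro i
    simp only [e, Equiv.coe_fn_mk, hF_def, ha_def, hb_def]
    rw [pow_add, div_mul_div_comm, one_mul]
  rw [hprod, hsplit, hSzeta, hTzeta, hDzeta]
  ring
end

section
/- For integers m, n ≥ 2, the product of zeta values satisfies the shuffle product formula: ζ(m)·ζ(n) = Σ_{i=0}^{m-1} C(n-1+i, i) ζ(m-i, n+i) + Σ_{j=0}^{n-1} C(m-1+j, j) ζ(n-j, m+j). -/
open Finset


lemma pf_aux (a b : ℝ) (ha : 0 < a) (hb : 0 < b) : ∀ M N : ℕ,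
    1 / (a ^ (M + 1) * b ^ (N + 1)) =
      (∑ i ∈ range (M + 1), (Nat.choose (N + i) i : ℝ) *
        (1 / (a ^ (M + 1 - i) * (a + b) ^ (N + 1 + i)))) +
      ∑ j ∈ range (N + 1), (Nat.choose (M + j) j : ℝ) *
        (1 / (b ^ (N + 1 - j) * (a + b) ^ (M + 1 + j))) := by
  have hs : (0:ℝ) < a + b := by linarith
  have ha' : a ≠ 0 := ha.ne'
  have hb' : b ≠ 0 := hb.ne'
  have hs' : a + b ≠ 0 := hs.ne'
  intro M
  induction M with
  | zero =>
    intro N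
    induction N with
    | zero => norm_num [Finset.sum_range_one]; field_simp; ring
    | succ N IH =>
      have key : 1 / (a ^ (0+1) * b ^ (N+1+1)) =
          (a+b)⁻¹ * (1 / (a ^ (0+1) * b ^ (N+1))) + 1 / ((a+b) * b ^ (N+1+1)) := by
        field_simp; ring
      rw [key, IH]
      rw [Finset.sum_range_succ' (fun j => (Nat.choose (0 + j) j : ℝ) *
        (1 / (b ^ (N + 1 + 1 - j) * (a + b) ^ (0 + 1 + j)))) (N+1)]
      simp only [Finset.sum_range_one, Nat.choose_self, Nat.choose_zero_right, Nat.cast_one,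
        one_mul, Nat.zero_add, Nat.add_zero, zero_add, Nat.sub_zero, mul_add, Finset.mul_sum]
      have h1 : ∀ i ∈ range (N+1),
          (a+b)⁻¹ * (1 / (b ^ (N + 1 - i) * (a + b) ^ (1 + i)))
            = 1 / (b ^ (N + 1 + 1 - (i+1)) * (a + b) ^ (1 + (i+1))) := by
        intro i hi
        have : N + 1 + 1 - (i+1) = N + 1 - i := by omega
        rw [this, show 1 + (i+1) = (1+i)+1 by omega, pow_succ]
        field_simp
      rw [Finset.sum_congr rfl h1]
      have h2 : (a+b)⁻¹ * (1 / (a * (a + b) ^ (N+1))) = 1 / (a * (a+b)^(N+1+1)) := by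
        rw [pow_succ]; field_simp; ring
      rw [pow_one] at *
      rw [h2]
      ring
  | succ M IHM =>
    intro N
    induction N with
    | zero =>
      have key : 1 / (a ^ (M+1+1) * b ^ (0+1)) =
          (a+b)⁻¹ * (1 / (a ^ (M+1) * b ^ (0+1))) + 1 / ((a+b) * a ^ (M+1+1)) := by
        field_simp; ring
      rw [key, IHM 0]
      rw [Finset.sum_range_succ' (fun i => (Nat.choose (0 + i) i : ℝ) *
        (1 / (a ^ (M + 1 + 1 - i) * (a + b) ^ (0 + 1 + i)))) (M+1)]
      simp only [Finset.sum_range_one, Nat.choose_self, Nat.choose_zero_right, Nat.cast_one,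
        one_mul, Nat.zero_add, Nat.add_zero, zero_add, Nat.sub_zero, mul_add, Finset.mul_sum]
      have h1 : ∀ i ∈ range (M+1),
          (a+b)⁻¹ * (1 / (a ^ (M + 1 - i) * (a + b) ^ (1 + i)))
            = 1 / (a ^ (M + 1 + 1 - (i+1)) * (a + b) ^ (1 + (i+1))) := by
        intro i hi
        have : M + 1 + 1 - (i+1) = M + 1 - i := by omega
        rw [this, show 1 + (i+1) = (1+i)+1 by omega, pow_succ]
        field_simp
      rw [Finset.sum_congr rfl h1]
      have h2 : (a+b)⁻¹ * (1 / (b * (a + b) ^ (M+1))) = 1 / (b * (a+b)^(M+1+1)) := by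
        rw [pow_succ]; field_simp; ring
      rw [pow_one] at *
      rw [h2]
      ring
    | succ N IHN =>
      have key : 1 / (a ^ (M+1+1) * b ^ (N+1+1)) =
          (a+b)⁻¹ * (1 / (a ^ (M+1) * b ^ (N+1+1))) +
            (a+b)⁻¹ * (1 / (a ^ (M+1+1) * b ^ (N+1))) := by
        field_simp; ring
      rw [key, IHM (N+1), IHN]
      -- peel i = 0 resp. j = 0 from the four sums of range (M+2) / (N+2)
      rw [Finset.sum_range_succ' (fun i => (Nat.choose (N + 1 + i) i : ℝ) *
        (1 / (a ^ (M + 1 + 1 - i) * (a + b) ^ (N + 1 + 1 + i)))) (M+1)]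
      rw [Finset.sum_range_succ' (fun j => (Nat.choose (M + 1 + j) j : ℝ) *
        (1 / (b ^ (N + 1 + 1 - j) * (a + b) ^ (M + 1 + 1 + j)))) (N+1)]
      rw [Finset.sum_range_succ' (fun i => (Nat.choose (N + i) i : ℝ) *
        (1 / (a ^ (M + 1 + 1 - i) * (a + b) ^ (N + 1 + i)))) (M+1)]
      rw [Finset.sum_range_succ' (fun j => (Nat.choose (M + j) j : ℝ) *
        (1 / (b ^ (N + 1 + 1 - j) * (a + b) ^ (M + 1 + j)))) (N+1)]
      simp only [mul_add, Finset.mul_sum]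
      have hA : ∀ i ∈ range (M+1),
          (Nat.choose (N + 1 + (i+1)) (i+1) : ℝ) *
              (1 / (a ^ (M + 1 + 1 - (i+1)) * (a + b) ^ (N + 1 + 1 + (i+1))))
            = (a+b)⁻¹ * ((Nat.choose (N + 1 + i) i : ℝ) *
                (1 / (a ^ (M + 1 - i) * (a + b) ^ (N + 1 + 1 + i)))) +
              (a+b)⁻¹ * ((Nat.choose (N + (i+1)) (i+1) : ℝ) *
                (1 / (a ^ (M + 1 + 1 - (i+1)) * (a + b) ^ (N + 1 + (i+1))))) := by
        intro i hi
        have pascal : (Nat.choose (N + 1 + (i+1)) (i+1) : ℝ)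
            = (Nat.choose (N + 1 + i) i : ℝ) + (Nat.choose (N + (i+1)) (i+1) : ℝ) := by
          rw [show N + 1 + (i+1) = (N + 1 + i) + 1 from by omega, Nat.choose_succ_succ,
            show N + 1 + i = N + (i+1) from by omega]
          push_cast; ring
        rw [pascal, show M + 1 + 1 - (i+1) = M + 1 - i from by omega,
          show N + 1 + (i+1) = N + 1 + 1 + i from by omega,
          show N + 1 + 1 + (i+1) = (N + 1 + 1 + i) + 1 from by omega, pow_succ]
        simp only [one_div, mul_inv]
        ring
      have hB : ∀ j ∈ range (N+1),
          (Nat.choose (M + 1 + (j+1)) (j+1) : ℝ) *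
              (1 / (b ^ (N + 1 + 1 - (j+1)) * (a + b) ^ (M + 1 + 1 + (j+1))))
            = (a+b)⁻¹ * ((Nat.choose (M + (j+1)) (j+1) : ℝ) *
                (1 / (b ^ (N + 1 + 1 - (j+1)) * (a + b) ^ (M + 1 + (j+1))))) +
              (a+b)⁻¹ * ((Nat.choose (M + 1 + j) j : ℝ) *
                (1 / (b ^ (N + 1 - j) * (a + b) ^ (M + 1 + 1 + j)))) := by
        intro j hj
        have pascal : (Nat.choose (M + 1 + (j+1)) (j+1) : ℝ)
            = (Nat.choose (M + 1 + j) j : ℝ) + (Nat.choose (M + (j+1)) (j+1) : ℝ) := by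
          rw [show M + 1 + (j+1) = (M + 1 + j) + 1 from by omega, Nat.choose_succ_succ,
            show M + 1 + j = M + (j+1) from by omega]
          push_cast; ring
        rw [pascal, show N + 1 + 1 - (j+1) = N + 1 - j from by omega,
          show M + 1 + (j+1) = M + 1 + 1 + j from by omega,
          show M + 1 + 1 + (j+1) = (M + 1 + 1 + j) + 1 from by omega, pow_succ]
        simp only [one_div, mul_inv]
        ring
      rw [Finset.sum_congr rfl hA, Finset.sum_congr rfl hB,
        Finset.sum_add_distrib, Finset.sum_add_distrib]
      have h0A : (Nat.choose (N + 1 + 0) 0 : ℝ) *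
            (1 / (a ^ (M + 1 + 1 - 0) * (a + b) ^ (N + 1 + 1 + 0)))
          = (a+b)⁻¹ * ((Nat.choose (N + 0) 0 : ℝ) *
            (1 / (a ^ (M + 1 + 1 - 0) * (a + b) ^ (N + 1 + 0)))) := by
        simp only [Nat.choose_zero_right, Nat.cast_one, one_mul, Nat.add_zero, Nat.sub_zero,
          add_zero]
        rw [pow_succ (a+b) (N+1)]
        simp only [one_div, mul_inv]
        ring
      have h0B : (Nat.choose (M + 1 + 0) 0 : ℝ) *
            (1 / (b ^ (N + 1 + 1 - 0) * (a + b) ^ (M + 1 + 1 + 0)))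
          = (a+b)⁻¹ * ((Nat.choose (M + 0) 0 : ℝ) *
            (1 / (b ^ (N + 1 + 1 - 0) * (a + b) ^ (M + 1 + 0)))) := by
        simp only [Nat.choose_zero_right, Nat.cast_one, one_mul, Nat.add_zero, Nat.sub_zero,
          add_zero]
        rw [pow_succ (a+b) (M+1)]
        simp only [one_div, mul_inv]
        ring
      rw [h0A, h0B]
      ring

lemma pf (a b : ℝ) (ha : 0 < a) (hb : 0 < b) (m n : ℕ) (hm : 1 ≤ m) (hn : 1 ≤ n) :
    1 / (a ^ m * b ^ n) =
      (∑ i ∈ range m, (Nat.choose (n - 1 + i) i : ℝ) *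
        (1 / (a ^ (m - i) * (a + b) ^ (n + i)))) +
      ∑ j ∈ range n, (Nat.choose (m - 1 + j) j : ℝ) *
        (1 / (b ^ (n - j) * (a + b) ^ (m + j))) := by
  obtain ⟨M, rfl⟩ : ∃ M, m = M + 1 := ⟨m - 1, by omega⟩
  obtain ⟨N, rfl⟩ : ∃ N, n = N + 1 := ⟨n - 1, by omega⟩
  simpa [Nat.add_sub_cancel] using pf_aux a b ha hb M N

def zetaEquiv1 : ℕ × ℕ ≃ {q : ℕ × ℕ // 0 < q.1 ∧ q.1 < q.2} where
  toFun p := ⟨(p.1 + 1, p.1 + p.2 + 2), by constructor <;> omega⟩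
  invFun q := (q.1.1 - 1, q.1.2 - q.1.1 - 1)
  left_inv p := by
    obtain ⟨x, y⟩ := p
    simp only [Prod.mk.injEq]
    omega
  right_inv q := by
    obtain ⟨⟨x, y⟩, hx, hxy⟩ := q
    simp only [Subtype.mk.injEq, Prod.mk.injEq]
    omega

def zetaEquiv2 : ℕ × ℕ ≃ {q : ℕ × ℕ // 0 < q.1 ∧ q.1 < q.2} where
  toFun p := ⟨(p.2 + 1, p.1 + p.2 + 2), by constructor <;> omega⟩
  invFun q := (q.1.2 - q.1.1 - 1, q.1.1 - 1)
  left_inv p := by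
    obtain ⟨x, y⟩ := p
    simp only [Prod.mk.injEq]
    omega
  right_inv q := by
    obtain ⟨⟨x, y⟩, hx, hxy⟩ := q
    simp only [Subtype.mk.injEq, Prod.mk.injEq]
    omega

lemma dzv1 (k₁ k₂ : ℕ) :
    doubleZetaVal k₁ k₂ =
      ∑' p : ℕ × ℕ, (1 : ℝ) / (((p.1 : ℝ) + 1) ^ k₁ * ((p.1 : ℝ) + (p.2 : ℝ) + 2) ^ k₂) := by
  rw [doubleZetaVal, ← zetaEquiv1.tsum_eq]
  apply tsum_congr
  intro p
  obtain ⟨x, y⟩ := p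
  simp only [zetaEquiv1, Equiv.coe_fn_mk]
  push_cast
  ring_nf

lemma dzv2 (k₁ k₂ : ℕ) :
    doubleZetaVal k₁ k₂ =
      ∑' p : ℕ × ℕ, (1 : ℝ) / (((p.2 : ℝ) + 1) ^ k₁ * ((p.1 : ℝ) + (p.2 : ℝ) + 2) ^ k₂) := by
  rw [doubleZetaVal, ← zetaEquiv2.tsum_eq]
  apply tsum_congr
  intro p
  obtain ⟨x, y⟩ := p
  simp only [zetaEquiv2, Equiv.coe_fn_mk]
  push_cast
  ring_nf

lemma hsumz (k : ℕ) (hk : 2 ≤ k) : Summable (fun a : ℕ => (1 : ℝ) / ((a : ℝ) + 1) ^ k) := by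
  have h := (Real.summable_one_div_nat_pow (p := k)).mpr (by omega)
  have h2 := (summable_nat_add_iff (f := fun n : ℕ => 1 / (n : ℝ) ^ k) 1).mpr h
  simpa using h2

set_option maxHeartbeats 1000000 in
/-- shuffle product formula
`ζ(m)·ζ(n) = Σ_{i=0}^{m-1} C(n-1+i,i) ζ(m-i,n+i) + Σ_{j=0}^{n-1} C(m-1+j,j) ζ(n-j,m+j)`
for `m, n ≥ 2`. -/
theorem shuffle_product (m n : ℕ) (hm : 2 ≤ m) (hn : 2 ≤ n) :
    zetaVal m * zetaVal n =
      (∑ i ∈ Finset.range m, (Nat.choose (n - 1 + i) i : ℝ) * doubleZetaVal (m - i) (n + i)) +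
      (∑ j ∈ Finset.range n, (Nat.choose (m - 1 + j) j : ℝ) * doubleZetaVal (n - j) (m + j)) := by
  have hm1 : 1 ≤ m := by omega
  have hn1 : 1 ≤ n := by omega
  have hf := hsumz m hm
  have hg := hsumz n hn
  have hF : Summable (fun p : ℕ × ℕ =>
      ((1 : ℝ) / ((p.1 : ℝ) + 1) ^ m) * ((1 : ℝ) / ((p.2 : ℝ) + 1) ^ n)) :=
    hf.mul_of_nonneg hg (fun a => by positivity) (fun a => by positivity)
  have hprod : zetaVal m * zetaVal n = ∑' p : ℕ × ℕ,
      ((1 : ℝ) / ((p.1 : ℝ) + 1) ^ m) * ((1 : ℝ) / ((p.2 : ℝ) + 1) ^ n) :=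
    Summable.tsum_mul_tsum hf hg hF
  set G : ℕ → ℕ × ℕ → ℝ := fun i p =>
    (1 : ℝ) / (((p.1 : ℝ) + 1) ^ (m - i) * ((p.1 : ℝ) + (p.2 : ℝ) + 2) ^ (n + i)) with hG
  set H : ℕ → ℕ × ℕ → ℝ := fun j p =>
    (1 : ℝ) / (((p.2 : ℝ) + 1) ^ (n - j) * ((p.1 : ℝ) + (p.2 : ℝ) + 2) ^ (m + j)) with hH
  have hdec : ∀ p : ℕ × ℕ,
      ((1 : ℝ) / ((p.1 : ℝ) + 1) ^ m) * ((1 : ℝ) / ((p.2 : ℝ) + 1) ^ n) =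
        (∑ i ∈ range m, (Nat.choose (n - 1 + i) i : ℝ) * G i p) +
        ∑ j ∈ range n, (Nat.choose (m - 1 + j) j : ℝ) * H j p := by
    intro p
    have h := pf ((p.1 : ℝ) + 1) ((p.2 : ℝ) + 1) (by positivity) (by positivity) m n hm1 hn1
    have hab : ((p.1 : ℝ) + 1) + ((p.2 : ℝ) + 1) = (p.1 : ℝ) + (p.2 : ℝ) + 2 := by ring
    rw [hab] at h
    calc ((1 : ℝ) / ((p.1 : ℝ) + 1) ^ m) * ((1 : ℝ) / ((p.2 : ℝ) + 1) ^ n)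
        = 1 / (((p.1 : ℝ) + 1) ^ m * ((p.2 : ℝ) + 1) ^ n) := by
          rw [div_mul_div_comm, one_mul]
      _ = _ := h
  have hGle : ∀ i ∈ range m, ∀ p : ℕ × ℕ,
      G i p ≤ ((1 : ℝ) / ((p.1 : ℝ) + 1) ^ m) * ((1 : ℝ) / ((p.2 : ℝ) + 1) ^ n) := by
    intro i hi p
    rw [hdec p]
    have t1 : G i p ≤ (Nat.choose (n - 1 + i) i : ℝ) * G i p := by
      apply le_mul_of_one_le_left (by positivity)
      exact_mod_cast Nat.one_le_iff_ne_zero.mpr (Nat.choose_pos (Nat.le_add_left i (n - 1))).ne'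
    have t2 : (Nat.choose (n - 1 + i) i : ℝ) * G i p ≤
        ∑ i' ∈ range m, (Nat.choose (n - 1 + i') i' : ℝ) * G i' p :=
      Finset.single_le_sum (f := fun i' => (Nat.choose (n - 1 + i') i' : ℝ) * G i' p)
        (fun j _ => by positivity) hi
    have t3 : (0 : ℝ) ≤ ∑ j ∈ range n, (Nat.choose (m - 1 + j) j : ℝ) * H j p :=
      Finset.sum_nonneg fun j _ => by positivity
    linarith
  have hHle : ∀ j ∈ range n, ∀ p : ℕ × ℕ,
      H j p ≤ ((1 : ℝ) / ((p.1 : ℝ) + 1) ^ m) * ((1 : ℝ) / ((p.2 : ℝ) + 1) ^ n) := by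
    intro j hj p
    rw [hdec p]
    have t1 : H j p ≤ (Nat.choose (m - 1 + j) j : ℝ) * H j p := by
      apply le_mul_of_one_le_left (by positivity)
      exact_mod_cast Nat.one_le_iff_ne_zero.mpr (Nat.choose_pos (Nat.le_add_left j (m - 1))).ne'
    have t2 : (Nat.choose (m - 1 + j) j : ℝ) * H j p ≤
        ∑ j' ∈ range n, (Nat.choose (m - 1 + j') j' : ℝ) * H j' p :=
      Finset.single_le_sum (f := fun j' => (Nat.choose (m - 1 + j') j' : ℝ) * H j' p)
        (fun j' _ => by positivity) hj
    have t3 : (0 : ℝ) ≤ ∑ i ∈ range m, (Nat.choose (n - 1 + i) i : ℝ) * G i p :=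
      Finset.sum_nonneg fun i _ => by positivity
    linarith
  have hGsum : ∀ i ∈ range m, Summable (G i) := fun i hi =>
    hF.of_nonneg_of_le (fun p => by positivity) (hGle i hi)
  have hHsum : ∀ j ∈ range n, Summable (H j) := fun j hj =>
    hF.of_nonneg_of_le (fun p => by positivity) (hHle j hj)
  have hGsum' : ∀ i ∈ range m,
      Summable (fun p => (Nat.choose (n - 1 + i) i : ℝ) * G i p) := fun i hi =>
    (hGsum i hi).mul_left _
  have hHsum' : ∀ j ∈ range n,
      Summable (fun p => (Nat.choose (m - 1 + j) j : ℝ) * H j p) := fun j hj =>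
    (hHsum j hj).mul_left _
  rw [hprod, tsum_congr hdec,
    Summable.tsum_add (summable_sum hGsum') (summable_sum hHsum'),
    Summable.tsum_finsetSum hGsum', Summable.tsum_finsetSum hHsum']
  congr 1
  · refine Finset.sum_congr rfl fun i hi => ?_
    rw [tsum_mul_left, dzv1 (m - i) (n + i)]
  · refine Finset.sum_congr rfl fun j hj => ?_
    rw [tsum_mul_left, dzv2 (n - j) (m + j)]
end

section
/- Let p be a prime and L a finitely ramified algebraic extension of ℚ_p with ramification index e_L < ∞. Fix a ∈ ℂ_p and let log^a denote the branch of the p-adic logarithm with log^a(p) = a. Then for every unit u in the ring of integers of L, |log^a(u)|_p ≤ p^{c_L} for any natural number c_L with p^{c_L} > e_L; in particular, the set {log^a(u) : u ∈ O_L^×} is bounded in ℂ_p. -/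
private lemma aux_nat' (p e c j M : ℕ) (hp : 1 < p) (hc : e < p ^ c)
    (hM : 0 < M) (hj : p ^ j ∣ M) : j * e ≤ c * e + M := by
  by_cases hjc : j ≤ c
  · calc j * e ≤ c * e := Nat.mul_le_mul_right e hjc
      _ ≤ c * e + M := Nat.le_add_right _ _
  · push_neg at hjc
    have h1 : j - c < p ^ (j - c) := Nat.lt_pow_self hp
    have h2 : (j - c) * e < p ^ (j - c) * p ^ c :=
      Nat.mul_lt_mul_of_lt_of_lt h1 hc
    rw [← pow_add, Nat.sub_add_cancel hjc.le] at h2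
    have h3 : p ^ j ≤ M := Nat.le_of_dvd hM hj
    have h4 : j * e = c * e + (j - c) * e := by
      rw [← Nat.add_mul, Nat.add_sub_cancel' hjc.le]
    omega

private lemma aux_real' (p e c M j : ℕ) (hp : 1 < p) (he : 0 < e) (hc : e < p ^ c)
    (hM : 0 < M) (hj : p ^ j ∣ M)
    (r : ℝ) (hr0 : 0 ≤ r) (hre : r ^ e ≤ (p : ℝ)⁻¹) :
    r ^ M * (p : ℝ) ^ j ≤ (p : ℝ) ^ c := by
  have hp1 : (1 : ℝ) < p := by exact_mod_cast hp
  have hp0 : (0 : ℝ) < p := by linarith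
  have hje : j * e ≤ c * e + M := aux_nat' p e c j M hp hc hM hj
  refine le_of_pow_le_pow_left₀ he.ne' (by positivity) ?_
  have key : (r ^ M * (p : ℝ) ^ j) ^ e = (r ^ e) ^ M * ((p : ℝ) ^ (j * e)) := by
    rw [mul_pow, ← pow_mul, ← pow_mul, mul_comm M e, pow_mul]
  rw [key]
  have h1 : (r ^ e) ^ M * ((p : ℝ) ^ (j * e)) ≤ ((p:ℝ)⁻¹) ^ M * (p : ℝ) ^ (j * e) := by
    gcongr
  refine h1.trans ?_
  have h2 : ((p:ℝ)⁻¹) ^ M * (p : ℝ) ^ (j * e) = (p : ℝ) ^ ((j * e : ℕ) - (M : ℕ) : ℤ) := by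
    rw [inv_pow, ← zpow_natCast (p:ℝ) (j*e), ← zpow_natCast (p:ℝ) M, ← zpow_neg,
      ← zpow_add₀ hp0.ne']
    ring_nf
  rw [h2, ← pow_mul, mul_comm c e, ← zpow_natCast (p:ℝ) (e * c)]
  apply zpow_le_zpow_right₀ hp1.le
  have : (e * c : ℕ) = (c * e : ℕ) := Nat.mul_comm e c
  omega

open IsUltrametricDist in
private lemma aux_punit' {p : ℕ} (hp : p.Prime) {K : Type*} [NormedField K]
    [IsUltrametricDist K]
    (hpK : ‖(p : K)‖ ≤ (p : ℝ)⁻¹) (hnat : ∀ n : ℕ, ‖(n : K)‖ ≤ 1)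
    {y : K} (hy : ‖y‖ ≤ 1) (h : ‖y ^ p - 1‖ < 1) : ‖y - 1‖ < 1 := by
  have hp1 : (1 : ℝ) < p := by exact_mod_cast hp.one_lt
  have hpinv : (p : ℝ)⁻¹ < 1 := inv_lt_one_of_one_lt₀ hp1
  have nsub : ∀ a b : K, ‖a - b‖ ≤ max ‖a‖ ‖b‖ := fun a b => by
    simpa [sub_eq_add_neg] using IsUltrametricDist.norm_add_le_max a (-b)
  set x := y - 1 with hx
  have hx1 : ‖x‖ ≤ 1 := by
    calc ‖x‖ ≤ max ‖y‖ ‖(1:K)‖ := nsub y 1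
      _ ≤ 1 := by simp [hy]
  obtain ⟨q, hq⟩ : ∃ q, p = q + 1 := ⟨p - 1, (Nat.succ_pred_eq_of_pos hp.pos).symm⟩
  have hexp : y ^ p = ∑ i ∈ Finset.range (p + 1), x ^ i * (p.choose i : K) := by
    have : y = x + 1 := by rw [hx]; ring
    rw [this, add_pow]
    simp
  have key : x ^ p = (y ^ p - 1) - ∑ i ∈ Finset.range q, x ^ (i + 1) * (p.choose (i + 1) : K) := by
    rw [hexp, Finset.sum_range_succ, hq, Finset.sum_range_succ']
    simp only [Nat.choose_self, Nat.cast_one, mul_one, pow_zero, Nat.choose_zero_right, one_mul]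
    ring
  have hsum : ‖∑ i ∈ Finset.range q, x ^ (i + 1) * (p.choose (i + 1) : K)‖ ≤ (p : ℝ)⁻¹ := by
    apply norm_sum_le_of_forall_le_of_nonneg (by positivity)
    intro i hi
    obtain ⟨t, ht⟩ := (hp.dvd_choose_self (Nat.succ_ne_zero i)
      (by have := Finset.mem_range.mp hi; omega : i + 1 < p))
    rw [ht]
    push_cast
    rw [norm_mul, norm_mul]
    calc ‖x ^ (i+1)‖ * (‖(p : K)‖ * ‖(t : K)‖)
        ≤ 1 * ((p:ℝ)⁻¹ * 1) := by
          apply mul_le_mul _ _ (by positivity) zero_le_one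
          · rw [norm_pow]; exact pow_le_one₀ (norm_nonneg x) hx1
          · exact mul_le_mul hpK (hnat t) (norm_nonneg _) (by positivity)
      _ = (p:ℝ)⁻¹ := by ring
  have hxp : ‖x ^ p‖ < 1 := by
    rw [key]
    exact lt_of_le_of_lt (nsub _ _) (max_lt h (lt_of_le_of_lt hsum hpinv))
  rw [norm_pow] at hxp
  exact (pow_lt_one_iff_of_nonneg (norm_nonneg x) hp.ne_zero).mp hxp

open IntermediateField in
/-- Let `K` be a model of `ℂ_p` and `L` a finitely ramified algebraic
(intermediate) extension of `ℚ_p` inside `K`, with ramification index `e < ∞` (the values of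
`‖·‖` on `L^×` satisfy `‖x‖^e ∈ p^ℤ`).  Fix a branch `Log` of the `p`-adic logarithm with
`Log p = a`.  Then for every unit `u` of the ring of integers of `L` (`‖u‖ = 1`) and every
natural `c` with `p^c > e`, one has `‖Log u‖ ≤ p^c`; in particular the `Log`-image of the
unit group of `O_L` is bounded. -/
theorem log_bounded_on_units (p : ℕ) [Fact p.Prime]
    (K : Type*) [NontriviallyNormedField K] [CompleteSpace K] [Algebra ℚ_[p] K]
    (hiso : ∀ x : ℚ_[p], ‖algebraMap ℚ_[p] K x‖ = ‖x‖)
    (hna : IsNonarchimedean (fun x : K => ‖x‖))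
    (a : K) (Log : K → K)
    (hhom : ∀ x y : K, x ≠ 0 → y ≠ 0 → Log (x * y) = Log x + Log y)
    (hser : ∀ x : K, ‖x‖ < 1 → Log (1 + x) = ∑' n : ℕ, (-1) ^ n * x ^ (n + 1) / ((n : K) + 1))
    (hbranch : Log ((p : K)) = a)
    (L : IntermediateField ℚ_[p] K)
    (halg : ∀ x : L, IsAlgebraic ℚ_[p] x)
    (e : ℕ) (he : 0 < e)
    (hram : ∀ x : L, (x : K) ≠ 0 → ∃ n : ℤ, ‖(x : K)‖ ^ e = (p : ℝ) ^ n)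
    (c : ℕ) (hc : e < p ^ c)
    (u : L) (hu : ‖(u : K)‖ = 1) :
    ‖Log (u : K)‖ ≤ (p : ℝ) ^ c := by
  have hp : p.Prime := Fact.out
  have hp1 : (1 : ℝ) < p := by exact_mod_cast hp.one_lt
  letI : NormedSpace ℚ_[p] K :=
    { (inferInstance : Module ℚ_[p] K) with
      norm_smul_le := fun c x => by rw [Algebra.smul_def, norm_mul, hiso] }
  letI : IsUltrametricDist K :=
    IsUltrametricDist.isUltrametricDist_of_isNonarchimedean_norm hna
  have hncast : ∀ n : ℕ, ‖(n : K)‖ = ‖(n : ℚ_[p])‖ := fun n => by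
    rw [← hiso, map_natCast]
  have hpK : ‖(p : K)‖ ≤ (p : ℝ)⁻¹ := by rw [hncast, Padic.norm_p]
  have hnat : ∀ n : ℕ, ‖(n : K)‖ ≤ 1 := fun n => by
    rw [hncast]
    have := Padic.norm_int_le_one (p := p) (n : ℤ)
    rwa [Int.cast_natCast] at this
  have huK : (u : K) ≠ 0 := by
    intro h0
    rw [h0, norm_zero] at hu
    exact one_ne_zero hu.symm
  -- basic properties of Log
  have hlog1 : Log 1 = 0 := by
    have h := hhom 1 1 one_ne_zero one_ne_zero
    rw [mul_one] at h
    have := add_left_cancel (a := Log 1) (b := (0:K)) (c := Log 1) (by rw [add_zero, ← h])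
    exact this.symm
  have hlogpow : ∀ (z : K), z ≠ 0 → ∀ n : ℕ, Log (z ^ n) = (n : K) * Log z := by
    intro z hz n
    induction n with
    | zero => simp [hlog1]
    | succ t ih =>
      rw [pow_succ, hhom _ _ (pow_ne_zero _ hz) hz, ih]
      push_cast
      ring
  -- Step 1: compactness gives N with ‖u^N - 1‖ < 1
  obtain ⟨N, hN0, hN⟩ : ∃ N : ℕ, 0 < N ∧ ‖(u : K) ^ N - 1‖ < 1 := by
    have halgu : IsAlgebraic ℚ_[p] (u : K) := (halg u).algHom L.val
    haveI : FiniteDimensional ℚ_[p] ℚ_[p]⟮(u : K)⟯ :=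
      IntermediateField.adjoin.finiteDimensional halgu.isIntegral
    set V := Subalgebra.toSubmodule (ℚ_[p]⟮(u : K)⟯).toSubalgebra with hV
    haveI : FiniteDimensional ℚ_[p] V :=
      inferInstanceAs (FiniteDimensional ℚ_[p] ℚ_[p]⟮(u : K)⟯)
    haveI : ProperSpace V := FiniteDimensional.proper ℚ_[p] V
    have hcomp : IsCompact (Subtype.val '' (Metric.closedBall (0 : V) 1) : Set K) :=
      (isCompact_closedBall _ _).image continuous_subtype_val
    have hmem : ∀ n : ℕ, (u : K) ^ n ∈ Subtype.val '' (Metric.closedBall (0 : V) 1) := by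
      intro n
      have h0 : (u : K) ∈ ℚ_[p]⟮(u : K)⟯ :=
        IntermediateField.subset_adjoin ℚ_[p] {(u : K)} rfl
      have h1 : (u : K) ^ n ∈ V := pow_mem h0 n
      refine ⟨⟨(u : K) ^ n, h1⟩, ?_, rfl⟩
      rw [Metric.mem_closedBall, dist_zero_right]
      show ‖(u : K) ^ n‖ ≤ 1
      rw [norm_pow, hu, one_pow]
    obtain ⟨z, -, φ, hφ, hconv⟩ := hcomp.tendsto_subseq hmem
    have hcauchy := hconv.cauchySeq
    rw [Metric.cauchySeq_iff] at hcauchy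
    obtain ⟨T, hT⟩ := hcauchy 1 one_pos
    have h2 := hT (T + 1) (by omega) T (by omega)
    have hlt : φ T < φ (T + 1) := hφ (by omega)
    refine ⟨φ (T + 1) - φ T, by omega, ?_⟩
    have hfac : (u : K) ^ (φ (T + 1)) - (u : K) ^ (φ T)
        = (u : K) ^ (φ T) * ((u : K) ^ (φ (T + 1) - φ T) - 1) := by
      rw [mul_sub, mul_one, ← pow_add]
      congr 2
      omega
    have h3 : ‖(u : K) ^ (φ (T + 1)) - (u : K) ^ (φ T)‖ < 1 := by
      simpa [Function.comp, dist_eq_norm] using h2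
    rw [hfac, norm_mul, norm_pow, hu, one_pow, one_mul] at h3
    exact h3
  -- Step 2: strip the p-part of N
  set k := N.factorization p with hk
  set m := N / p ^ k with hm
  have hmN : p ^ k * m = N := Nat.ordProj_mul_ordCompl_eq_self N p
  have hm0 : 0 < m := Nat.ordCompl_pos p hN0.ne'
  have hmp : ¬ p ∣ m := Nat.not_dvd_ordCompl hp hN0.ne'
  have hiter : ∀ k' : ℕ, ∀ y : K, ‖y‖ ≤ 1 → ‖y ^ (p ^ k') - 1‖ < 1 → ‖y - 1‖ < 1 := by
    intro k'
    induction k' with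
    | zero => intro y hy h; simpa using h
    | succ t ih =>
      intro y hy h
      apply ih y hy
      apply aux_punit' hp hpK hnat (by rw [norm_pow]; exact pow_le_one₀ (norm_nonneg y) hy)
      rw [← pow_mul, ← pow_succ]
      exact h
  have hw1 : ‖(u : K) ^ m - 1‖ < 1 := by
    apply hiter k
    · rw [norm_pow, hu, one_pow]
    · have hpow : ((u : K) ^ m) ^ (p ^ k) = (u : K) ^ N := by
        rw [← pow_mul, mul_comm, hmN]
      rw [hpow]
      exact hN
  -- Step 3: the series bound
  set w := (u : K) ^ m with hwdef
  set x := w - 1 with hxdef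
  have hx1 : ‖x‖ < 1 := hw1
  have hlogw : Log w = ∑' n : ℕ, (-1) ^ n * x ^ (n + 1) / ((n : K) + 1) := by
    have h1 : (1 : K) + x = w := by rw [hxdef]; ring
    have := hser x hx1
    rwa [h1] at this
  have hmK : ‖(m : K)‖ = 1 := by
    rw [hncast]
    have hle := Padic.norm_int_le_one (p := p) (m : ℤ)
    have hlt : ¬ ‖((m : ℤ) : ℚ_[p])‖ < 1 := by
      rw [Padic.norm_intCast_lt_one_iff]
      exact_mod_cast hmp
    rw [Int.cast_natCast] at hle hlt
    exact le_antisymm hle (not_lt.mp hlt)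
  have hnorm_eq : ‖Log (u : K)‖ = ‖Log w‖ := by
    rw [hwdef, hlogpow _ huK m, norm_mul, hmK, one_mul]
  rw [hnorm_eq, hlogw]
  apply IsUltrametricDist.norm_tsum_le_of_forall_le_of_nonneg (by positivity)
  intro n
  rcases eq_or_ne x 0 with hx0 | hx0
  · rw [hx0]
    simp only [zero_pow (Nat.succ_ne_zero n), mul_zero, zero_div, norm_zero]
    positivity
  · obtain ⟨xl, hxl⟩ : ∃ xl : L, (xl : K) = x :=
      ⟨u ^ m - 1, by push_cast [hwdef, hxdef]; ring⟩
    obtain ⟨n0, hn0⟩ := hram xl (by rw [hxl]; exact hx0)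
    rw [hxl] at hn0
    have hxe1 : ‖x‖ ^ e < 1 := pow_lt_one₀ (norm_nonneg x) hx1 he.ne'
    have hn0neg : n0 < 0 := by
      by_contra hcon
      push_neg at hcon
      have h1 : (1 : ℝ) ≤ (p : ℝ) ^ n0 := one_le_zpow₀ hp1.le hcon
      rw [← hn0] at h1
      linarith
    have hxe : ‖x‖ ^ e ≤ (p : ℝ)⁻¹ := by
      rw [hn0]
      calc (p : ℝ) ^ n0 ≤ (p : ℝ) ^ (-1 : ℤ) := zpow_le_zpow_right₀ hp1.le (by omega)
        _ = (p : ℝ)⁻¹ := by rw [zpow_neg_one]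
    set M := n + 1 with hMdef
    set j := M.factorization p with hj
    set s := M / p ^ j with hs
    have hMs : p ^ j * s = M := Nat.ordProj_mul_ordCompl_eq_self M p
    have hsp : ¬ p ∣ s := Nat.not_dvd_ordCompl hp (Nat.succ_ne_zero n)
    have hsK : ‖(s : ℚ_[p])‖ = 1 := by
      have hle := Padic.norm_int_le_one (p := p) (s : ℤ)
      have hlt : ¬ ‖((s : ℤ) : ℚ_[p])‖ < 1 := by
        rw [Padic.norm_intCast_lt_one_iff]
        exact_mod_cast hsp
      rw [Int.cast_natCast] at hle hlt
      exact le_antisymm hle (not_lt.mp hlt)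
    have hMnorm : ‖((n : K) + 1)‖ = ((p : ℝ)⁻¹) ^ j := by
      have hcast : ((n : K) + 1) = ((M : ℕ) : K) := by rw [hMdef]; push_cast; ring
      rw [hcast, hncast, ← hMs]
      push_cast
      rw [norm_mul, norm_pow, Padic.norm_p, hsK, mul_one]
    rw [norm_div, norm_mul, norm_pow, norm_pow, norm_neg, norm_one, one_pow, one_mul, hMnorm,
      div_eq_mul_inv, inv_pow, inv_inv]
    exact aux_real' p e c M j hp.one_lt he hc (Nat.succ_pos n) ⟨s, hMs.symm⟩
      ‖x‖ (norm_nonneg x) hxe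
end

section
/- Let p be a prime, a ∈ ℂ_p, n ≥ 0 a natural number, and L a finitely ramified algebraic extension of ℚ_p (i.e., e(L/ℚ_p) < ∞). If {ε_k} is a sequence in L \ {0} with ε_k → 0 in ℂ_p, then ε_k · (log^a ε_k)^n → 0. -/
open Filter

lemma aux_nonarch_sum {K : Type*} [SeminormedAddCommGroup K]
    (hna : IsNonarchimedean (fun x : K => ‖x‖)) {ι : Type*} (s : Finset ι) (f : ι → K)
    {c : ℝ} (hc : 0 ≤ c) (h : ∀ i ∈ s, ‖f i‖ ≤ c) : ‖∑ i ∈ s, f i‖ ≤ c := by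
  induction s using Finset.cons_induction with
  | empty => simpa using hc
  | cons i s hi ih =>
    rw [Finset.sum_cons]
    refine le_trans (hna _ _) (max_le (h i (Finset.mem_cons_self i s)) (ih ?_))
    exact fun j hj => h j (Finset.mem_cons_of_mem hj)

lemma aux_padic_nat_norm_lb (p : ℕ) [hp : Fact p.Prime] (m : ℕ) (hm : 0 < m) :
    ((m:ℝ))⁻¹ ≤ ‖((m : ℚ_[p]))‖ := by
  have hm0 : ((m : ℚ_[p])) ≠ 0 := Nat.cast_ne_zero.mpr hm.ne'
  obtain ⟨z, hz⟩ := padicNormE.image' (p := p) hm0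
  have hz' : ‖(m : ℚ_[p])‖ = (p : ℝ) ^ (-z) := by
    rw [← Padic.padicNormE.is_norm, hz]; push_cast; ring
  have hp1 : (1:ℝ) < (p:ℝ) := by exact_mod_cast hp.out.one_lt
  have hzpos : 0 ≤ z := by
    by_contra h
    push_neg at h
    have h1 : (1:ℝ) < (p:ℝ) ^ (-z) := by
      apply one_lt_zpow₀ hp1; omega
    have h2 : ‖(m : ℚ_[p])‖ ≤ 1 := by
      have := Padic.norm_int_le_one (p := p) (m : ℤ)
      simpa using this
    rw [hz'] at h2; linarith
  lift z to ℕ using hzpos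
  have hdvd : (p ^ z : ℤ) ∣ (m : ℤ) := by
    rw [← Padic.norm_int_le_pow_iff_dvd]
    push_cast
    rw [hz']
  have hle : (p:ℝ) ^ (z:ℤ) ≤ (m:ℝ) := by
    have : (p ^ z : ℕ) ≤ m := by exact_mod_cast Int.le_of_dvd (by exact_mod_cast hm) hdvd
    push_cast at this ⊢
    exact_mod_cast this
  rw [hz', zpow_neg, inv_le_inv₀ (by positivity) (by positivity)]
  exact hle

/-- Let `K` be a model of `ℂ_p`, `Log` a branch of the `p`-adic logarithm with
`Log p = a`, and `L` a finitely ramified algebraic (intermediate) extension of `ℚ_p` inside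
`K`.  If `ε : ℕ → L \ {0}` tends to `0` in `K`, then `ε_k · (Log ε_k)^n → 0` for every
`n ≥ 0`. -/
theorem eps_mul_log_pow_tendsto_zero (p : ℕ) [Fact p.Prime]
    (K : Type*) [NontriviallyNormedField K] [CompleteSpace K] [Algebra ℚ_[p] K]
    (hiso : ∀ x : ℚ_[p], ‖algebraMap ℚ_[p] K x‖ = ‖x‖)
    (hna : IsNonarchimedean (fun x : K => ‖x‖))
    (a : K) (Log : K → K)
    (hhom : ∀ x y : K, x ≠ 0 → y ≠ 0 → Log (x * y) = Log x + Log y)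
    (hser : ∀ x : K, ‖x‖ < 1 → Log (1 + x) = ∑' n : ℕ, (-1) ^ n * x ^ (n + 1) / ((n : K) + 1))
    (hbranch : Log ((p : K)) = a)
    (L : IntermediateField ℚ_[p] K)
    (halg : ∀ x : L, IsAlgebraic ℚ_[p] x)
    (e : ℕ) (he : 0 < e)
    (hram : ∀ x : L, (x : K) ≠ 0 → ∃ n : ℤ, ‖(x : K)‖ ^ e = (p : ℝ) ^ n)
    (n : ℕ) (ε : ℕ → L) (hε : ∀ j, (ε j : K) ≠ 0)
    (hlim : Tendsto (fun j => ((ε j : K))) atTop (nhds 0)) :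
    Tendsto (fun j => (ε j : K) * (Log ((ε j : K))) ^ n) atTop (nhds 0) := by
  have hp : Fact p.Prime := inferInstance
  have hp1 : (1:ℝ) < (p:ℝ) := by exact_mod_cast hp.out.one_lt
  -- norms of integer casts in K
  have hintK : ∀ m : ℤ, ‖((m : K))‖ = ‖((m : ℚ_[p]))‖ := by
    intro m
    rw [← map_intCast (algebraMap ℚ_[p] K) m, hiso]
  have hnatK : ∀ m : ℕ, ‖((m : K))‖ = ‖((m : ℚ_[p]))‖ := by
    intro m
    rw [← map_natCast (algebraMap ℚ_[p] K) m, hiso]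
  have hpK : ‖((p : K))‖ = (p:ℝ)⁻¹ := by
    rw [hnatK]
    exact_mod_cast Padic.norm_p
  have hpK0 : ((p : K)) ≠ 0 := by
    intro h
    rw [h, norm_zero] at hpK
    have : (0:ℝ) < (p:ℝ)⁻¹ := by positivity
    linarith
  -- algebraic identities for Log
  have hlog1 : Log 1 = 0 := by
    have h := hhom 1 1 one_ne_zero one_ne_zero
    rw [mul_one] at h
    simpa using (congrArg (fun t => t - Log 1) h).symm
  have hpow : ∀ (x : K), x ≠ 0 → ∀ k : ℕ, Log (x ^ k) = (k : K) * Log x := by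
    intro x hx k
    induction k with
    | zero => simpa using hlog1
    | succ k ih =>
      rw [pow_succ, hhom _ _ (pow_ne_zero _ hx) hx, ih]
      push_cast; ring
  have hinv : ∀ (x : K), x ≠ 0 → Log x⁻¹ = - Log x := by
    intro x hx
    have h := hhom x x⁻¹ hx (inv_ne_zero hx)
    rw [mul_inv_cancel₀ hx, hlog1] at h
    linear_combination -h
  have hzpow : ∀ (x : K), x ≠ 0 → ∀ m : ℤ, Log (x ^ m) = (m : K) * Log x := by
    intro x hx m
    rcases m with k | k
    · simpa using hpow x hx k
    · rw [zpow_negSucc, hinv _ (pow_ne_zero _ hx), hpow x hx]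
      push_cast; ring
  -- the radius r and the constant C
  set r : ℝ := ((p:ℝ)⁻¹) ^ ((e:ℝ)⁻¹) with hrdef
  have hr0 : 0 ≤ r := by positivity
  have hr1 : r < 1 := by
    apply Real.rpow_lt_one (by positivity) (by rw [inv_lt_one_iff₀]; right; exact hp1)
    positivity
  have hsumR : Summable (fun k : ℕ => ((k:ℝ)+1) * r ^ (k+1)) := by
    have h1 : Summable (fun k : ℕ => ((k:ℝ)+1) * r ^ k) := by
      have := summable_pow_mul_geometric_of_norm_lt_one (R := ℝ) 1 (r := r)
        (by rwa [Real.norm_eq_abs, abs_of_nonneg hr0])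
      simpa [add_mul, one_mul, pow_one] using this.add (summable_geometric_of_lt_one hr0 hr1)
    have := h1.mul_left r
    apply Summable.congr this
    intro k; ring
  set C : ℝ := ∑' k : ℕ, ((k:ℝ)+1) * r ^ (k+1) with hC
  have hC0 : 0 ≤ C := tsum_nonneg (fun k => by positivity)
  -- the series bound
  have hseries : ∀ y : K, ‖y‖ ≤ r → ‖Log (1 + y)‖ ≤ C := by
    intro y hy
    have hy1 : ‖y‖ < 1 := lt_of_le_of_lt hy hr1
    rw [hser y hy1]
    have hterm : ∀ k : ℕ, ‖(-1:K) ^ k * y ^ (k + 1) / ((k : K) + 1)‖ ≤ ((k:ℝ)+1) * r ^ (k+1) := by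
      intro k
      have hden : ‖((k : K) + 1)‖ = ‖(((k+1 : ℕ)) : ℚ_[p])‖ := by
        rw [← hnatK]; push_cast; ring_nf
      have hlb := aux_padic_nat_norm_lb p (k+1) (Nat.succ_pos k)
      have hdenpos : (0:ℝ) < ‖((k : K) + 1)‖ := by
        rw [hden]
        calc (0:ℝ) < ((k+1:ℕ):ℝ)⁻¹ := by positivity
          _ ≤ _ := hlb
      rw [norm_div, norm_mul, norm_pow, norm_pow, norm_neg, norm_one, one_pow, one_mul]
      rw [div_le_iff₀ hdenpos]
      calc ‖y‖ ^ (k+1) ≤ r ^ (k+1) := pow_le_pow_left₀ (norm_nonneg _) hy _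
        _ = (r ^ (k+1) * ((k:ℝ)+1)) * ((k:ℝ)+1)⁻¹ := by field_simp
        _ ≤ (r ^ (k+1) * ((k:ℝ)+1)) * ‖((k : K) + 1)‖ := by
            apply mul_le_mul_of_nonneg_left _ (by positivity)
            rw [hden]
            calc ((k:ℝ)+1)⁻¹ = (((k+1:ℕ):ℝ))⁻¹ := by push_cast; ring_nf
              _ ≤ _ := hlb
        _ = ((k:ℝ)+1) * r ^ (k+1) * ‖((k : K) + 1)‖ := by ring
    have hsumN : Summable (fun k : ℕ => ‖(-1:K) ^ k * y ^ (k + 1) / ((k : K) + 1)‖) :=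
      Summable.of_nonneg_of_le (fun k => norm_nonneg _) hterm hsumR
    calc ‖∑' k : ℕ, (-1:K) ^ k * y ^ (k + 1) / ((k : K) + 1)‖
        ≤ ∑' k : ℕ, ‖(-1:K) ^ k * y ^ (k + 1) / ((k : K) + 1)‖ :=
          norm_tsum_le_tsum_norm hsumN
      _ ≤ C := Summable.tsum_le_tsum hterm hsumN hsumR
  -- from ‖·‖^e ≤ p⁻¹ to ‖·‖ ≤ r
  have hto_r : ∀ t : ℝ, 0 ≤ t → t ^ e ≤ (p:ℝ)⁻¹ → t ≤ r := by
    intro t ht hte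
    have h1 : (t ^ e : ℝ) ^ ((e:ℝ)⁻¹) ≤ r := by
      rw [hrdef]
      exact Real.rpow_le_rpow (by positivity) hte (by positivity)
    calc t = (t ^ (e:ℝ)) ^ ((e:ℝ)⁻¹) := by
          rw [← Real.rpow_mul ht, mul_inv_cancel₀ (by exact_mod_cast he.ne' : (e:ℝ) ≠ 0),
            Real.rpow_one]
      _ ≤ r := by rw [Real.rpow_natCast]; exact h1
  -- the bound on Log for norm-one elements of L
  have hunit : ∀ u : L, ‖(u : K)‖ = 1 → ‖Log ((u : K))‖ ≤ C := by
    intro u hu1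
    set uK : K := (u : K) with huK
    have huK0 : uK ≠ 0 := by
      intro h; rw [h, norm_zero] at hu1; norm_num at hu1
    -- Step 1: compactness gives a power close to 1
    have hstep1 : ∃ N : ℕ, 0 < N ∧ ‖uK ^ N - 1‖ < 1 := by
      letI : NormedSpace ℚ_[p] K :=
        { norm_smul_le := fun c x => le_of_eq (by rw [Algebra.smul_def, norm_mul, hiso]) }
      have halgu : IsAlgebraic ℚ_[p] uK := (halg u).algHom L.val
      have hint : IsIntegral ℚ_[p] uK := halgu.isIntegral
      haveI hfd : FiniteDimensional ℚ_[p] (IntermediateField.adjoin ℚ_[p] {uK}) :=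
        IntermediateField.adjoin.finiteDimensional hint
      set S : Submodule ℚ_[p] K :=
        Subalgebra.toSubmodule (IntermediateField.adjoin ℚ_[p] {uK}).toSubalgebra with hS
      haveI : FiniteDimensional ℚ_[p] S := hfd
      haveI : ProperSpace S := FiniteDimensional.proper ℚ_[p] S
      have hpk : ∀ k : ℕ, uK ^ k ∈ S := by
        intro k
        simp only [hS, Subalgebra.mem_toSubmodule]
        exact pow_mem (by exact IntermediateField.mem_adjoin_simple_self ℚ_[p] uK :
          uK ∈ (IntermediateField.adjoin ℚ_[p] {uK}).toSubalgebra) k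
      set v : ℕ → S := fun k => ⟨uK ^ k, hpk k⟩ with hv
      have hvb : ∀ k, v k ∈ Metric.closedBall (0 : S) 1 := by
        intro k
        simp only [Metric.mem_closedBall, dist_zero_right]
        show ‖uK ^ k‖ ≤ 1
        rw [norm_pow, hu1, one_pow]
      obtain ⟨x, -, φ, hmono, hφ⟩ :=
        tendsto_subseq_of_bounded Metric.isBounded_closedBall hvb
      obtain ⟨N, hN⟩ := Metric.cauchySeq_iff'.mp hφ.cauchySeq 1 one_pos
      have hd := hN (N + 1) (Nat.le_succ N)
      have hij : φ N < φ (N + 1) := hmono (Nat.lt_succ_self N)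
      refine ⟨φ (N + 1) - φ N, by omega, ?_⟩
      have hdist : ‖uK ^ (φ (N+1)) - uK ^ (φ N)‖ < 1 := by
        have : dist (v (φ (N+1))) (v (φ N)) < 1 := hd
        rwa [Subtype.dist_eq, dist_eq_norm] at this
      have hfact : uK ^ (φ (N+1)) - uK ^ (φ N) = uK ^ (φ N) * (uK ^ (φ (N+1) - φ N) - 1) := by
        rw [mul_sub, mul_one, ← pow_add, Nat.add_sub_cancel' hij.le]
      rw [hfact, norm_mul, norm_pow, hu1, one_pow, one_mul] at hdist
      exact hdist
    obtain ⟨N, hN, hlt⟩ := hstep1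
    -- Step 2: remove the p-part of N
    set N₀ := N / p ^ (N.factorization p) with hN₀
    have hstep2 : ‖uK ^ N₀ - 1‖ < 1 := by
      set m := p ^ (N.factorization p) with hm
      have hmN : m * N₀ = N := Nat.ordProj_mul_ordCompl_eq_self N p
      have hm1 : 1 ≤ m := Nat.one_le_pow _ _ hp.out.pos
      set w := uK ^ N₀ with hw
      set b := w - 1 with hb
      have hwm : w ^ m = uK ^ N := by rw [hw, ← pow_mul, mul_comm, hmN]
      have hb1 : ‖b‖ ≤ 1 := by
        have h := hna w (-1)
        simp only [norm_neg, norm_one] at h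
        calc ‖b‖ = ‖w + (-1)‖ := by rw [hb]; ring_nf
          _ ≤ max ‖w‖ 1 := h
          _ ≤ 1 := by rw [hw, norm_pow, hu1, one_pow]; simp
      have hrange : Finset.range (m+1) = insert 0 (insert m (Finset.Ioo 0 m)) := by
        ext k
        simp only [Finset.mem_range, Finset.mem_insert, Finset.mem_Ioo]
        omega
      have hpowm : w ^ m = 1 + b ^ m + ∑ k ∈ Finset.Ioo 0 m, b ^ k * (m.choose k : K) := by
        have hcomm : w ^ m = (b + 1) ^ m := by rw [hb]; ring_nf
        rw [hcomm, add_pow, hrange, Finset.sum_insert, Finset.sum_insert]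
        · simp [Nat.choose_self]
          ring
        · simp
        · simp only [Finset.mem_insert, Finset.mem_Ioo]
          omega
      have hsum : ‖∑ k ∈ Finset.Ioo 0 m, b ^ k * (m.choose k : K)‖ ≤ (p:ℝ)⁻¹ := by
        apply aux_nonarch_sum hna _ _ (by positivity)
        intro k hk
        simp only [Finset.mem_Ioo] at hk
        obtain ⟨t, ht⟩ := hp.out.dvd_choose_pow (n := N.factorization p) (k := k)
          (by omega) (by rw [← hm]; omega)
        rw [norm_mul, norm_pow]
        have hCd : ((m.choose k : ℕ) : K) = (p : K) * (t : K) := by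
          rw [ht]; push_cast; ring
        calc ‖b‖ ^ k * ‖((m.choose k : ℕ) : K)‖
            ≤ 1 * ‖((m.choose k : ℕ) : K)‖ := by
              apply mul_le_mul_of_nonneg_right (pow_le_one₀ (norm_nonneg _) hb1) (norm_nonneg _)
          _ = ‖(p : K)‖ * ‖(t : K)‖ := by rw [one_mul, hCd, norm_mul]
          _ ≤ ‖(p : K)‖ * 1 := by
              apply mul_le_mul_of_nonneg_left _ (norm_nonneg _)
              rw [show ((t : K)) = ((t : ℤ) : K) by push_cast; rfl, hintK]
              exact Padic.norm_int_le_one _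
          _ = (p:ℝ)⁻¹ := by rw [mul_one, hpK]
      have hbm : ‖b ^ m‖ < 1 := by
        have hident : b ^ m = (w ^ m - 1) + -(∑ k ∈ Finset.Ioo 0 m, b ^ k * (m.choose k : K)) := by
          rw [hpowm]; ring
        rw [hident]
        refine lt_of_le_of_lt (hna _ _) (max_lt ?_ ?_)
        · rwa [hwm]
        · show ‖-(∑ k ∈ Finset.Ioo 0 m, b ^ k * (m.choose k : K))‖ < 1
          rw [norm_neg]
          refine lt_of_le_of_lt hsum ?_
          rw [inv_lt_one_iff₀]
          right
          exact hp1
      rw [norm_pow] at hbm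
      exact pow_lt_one_iff_of_nonneg (norm_nonneg b) (by omega : m ≠ 0) |>.mp hbm
    -- N₀ is positive and coprime to p
    have hN₀pos : 0 < N₀ := Nat.ordCompl_pos p hN.ne'
    have hN₀p : ¬ (p:ℤ) ∣ (N₀ : ℤ) := by
      intro h
      exact Nat.not_dvd_ordCompl hp.out hN.ne' (by exact_mod_cast h)
    have hN₀norm : ‖((N₀ : ℕ) : K)‖ = 1 := by
      rw [show (((N₀:ℕ)) : K) = (((N₀:ℕ) : ℤ) : K) by push_cast; rfl, hintK]
      refine le_antisymm (Padic.norm_int_le_one _) ?_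
      by_contra h
      push_neg at h
      exact hN₀p ((Padic.norm_intCast_lt_one_iff).mp h)
    -- Step 3: bound Log of uK
    rcases eq_or_ne (uK ^ N₀) 1 with heq | hne
    · -- root of unity : Log uK = 0
      have h0 : ((N₀ : ℕ) : K) * Log uK = 0 := by
        rw [← hpow uK huK0 N₀, heq, hlog1]
      have hN₀K : ((N₀ : ℕ) : K) ≠ 0 := by
        intro h
        rw [h, norm_zero] at hN₀norm
        norm_num at hN₀norm
      rcases mul_eq_zero.mp h0 with h | h
      · exact absurd h hN₀K
      · rw [h, norm_zero]; exact hC0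
    · -- otherwise use the discreteness of the valuation on L
      set bL : L := u ^ N₀ - 1 with hbL
      have hbLK : ((bL : K)) = uK ^ N₀ - 1 := by
        push_cast [hbL]
        rfl
      have hbL0 : ((bL : K)) ≠ 0 := by
        rw [hbLK]
        intro h
        exact hne (by linear_combination h)
      obtain ⟨z, hz⟩ := hram bL hbL0
      have hzneg : (z:ℤ) ≤ -1 := by
        by_contra h
        push_neg at h
        have h1 : (1:ℝ) ≤ (p:ℝ) ^ z := by
          apply one_le_zpow₀ hp1.le
          omega
        have h2 : ‖((bL : K))‖ ^ e < 1 := by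
          apply pow_lt_one₀ (norm_nonneg _) _ he.ne'
          rw [hbLK]; exact hstep2
        rw [hz] at h2
        linarith
      have hble : ‖((bL : K))‖ ^ e ≤ (p:ℝ)⁻¹ := by
        rw [hz]
        calc (p:ℝ) ^ z ≤ (p:ℝ) ^ (-1 : ℤ) := by
              apply zpow_le_zpow_right₀ hp1.le hzneg
          _ = (p:ℝ)⁻¹ := by simp
      have hbr : ‖((bL : K))‖ ≤ r := hto_r _ (norm_nonneg _) hble
      have hlogw : ‖Log (uK ^ N₀)‖ ≤ C := by
        have h1 : uK ^ N₀ = 1 + ((bL : K)) := by rw [hbLK]; ring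
        rw [h1]
        exact hseries _ hbr
      rw [hpow uK huK0 N₀, norm_mul, hN₀norm, one_mul] at hlogw
      exact hlogw
  -- the global bound D
  set D : ℝ := ‖((e : ℕ) : K)‖⁻¹ * max C ‖a‖ with hD
  have hD0 : 0 ≤ D := by
    apply mul_nonneg (by positivity)
    exact le_trans hC0 (le_max_left _ _)
  have heK : ((e : ℕ) : K) ≠ 0 := by
    rw [show (((e:ℕ)) : K) = algebraMap ℚ_[p] K ((e:ℕ) : ℚ_[p]) by rw [map_natCast]]
    simp only [ne_eq, map_eq_zero]
    exact_mod_cast he.ne'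
  have hbound : ∀ x : L, (x : K) ≠ 0 → ‖Log ((x : K))‖ ≤ D := by
    intro x hx
    obtain ⟨z, hz⟩ := hram x hx
    -- the unit u = x^e * p^z
    set u : L := x ^ e * ((p : ℕ) : L) ^ (z : ℤ) with hu
    have hpL : (((((p:ℕ) : L)) : K)) = ((p:ℕ) : K) := by push_cast; rfl
    have hpL0 : (((p:ℕ) : L)) ≠ 0 := by
      intro h
      apply hpK0
      rw [← hpL, h]
      push_cast
      rfl
    have huKeq : ((u : K)) = ((x : K)) ^ e * ((p : K)) ^ (z : ℤ) := by
      push_cast [hu]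
      rfl
    have hu1 : ‖(u : K)‖ = 1 := by
      rw [huKeq, norm_mul, norm_pow, norm_zpow, hpK, hz, inv_zpow, ← zpow_neg,
        ← zpow_add₀ (by positivity : (p:ℝ) ≠ 0), add_neg_cancel, zpow_zero]
    have hxe : ((x : K)) ^ e = ((u : K)) * ((p : K)) ^ (-z : ℤ) := by
      rw [huKeq, mul_assoc, ← zpow_add₀ hpK0]
      simp
    have huK0 : ((u : K)) ≠ 0 := by
      intro h; rw [h, norm_zero] at hu1; norm_num at hu1
    have hkey : ((e : ℕ) : K) * Log ((x : K)) = Log ((u : K)) + ((-z : ℤ) : K) * a := by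
      rw [← hpow _ hx e, hxe, hhom _ _ huK0 (zpow_ne_zero _ hpK0),
        hzpow _ hpK0 (-z), hbranch]
    have hnorm2 : ‖((e : ℕ) : K) * Log ((x : K))‖ ≤ max C ‖a‖ := by
      rw [hkey]
      refine le_trans (hna _ _) (max_le ?_ ?_)
      · exact le_trans (hunit u hu1) (le_max_left _ _)
      · show ‖((-z : ℤ) : K) * a‖ ≤ max C ‖a‖
        rw [norm_mul, hintK]
        refine le_trans ?_ (le_max_right _ _)
        calc ‖((-z : ℤ) : ℚ_[p])‖ * ‖a‖ ≤ 1 * ‖a‖ :=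
              mul_le_mul_of_nonneg_right (Padic.norm_int_le_one _) (norm_nonneg _)
          _ = ‖a‖ := one_mul _
    rw [norm_mul] at hnorm2
    rw [hD]
    rw [← div_eq_inv_mul, le_div_iff₀ (by simpa [norm_pos_iff] using heK), mul_comm]
    exact hnorm2
  -- conclusion
  have h2 : Tendsto (fun j => ‖(ε j : K)‖ * D ^ n) atTop (nhds 0) := by
    simpa using (hlim.norm.mul_const (D ^ n))
  refine squeeze_zero_norm (fun j => ?_) h2
  rw [norm_mul, norm_pow]
  exact mul_le_mul_of_nonneg_left (pow_le_pow_left₀ (norm_nonneg _) (hbound _ (hε j)) n)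
    (norm_nonneg _)
end

section
/- Let Q⟨A,B⟩ be the noncommutative polynomial ring graded by total degree with deg A = deg B = 1, and let ∘ denote the shuffle product on words. Define the Q-linear maps: g₂∘g₁ : Q⟨A,B⟩ → Q⟨A,B⟩ where g₁ sends A ↦ A - α, B ↦ B (an algebra map into Q⟨A,B⟩[[α]]) and g₂ sends W ⊗ α^q ↦ W·A^q; and F' : Q⟨A,B⟩ → Q⟨A,B⟩ sending a word W = W'·A^r (with W' ∈ Q⟨A,B⟩·B ∪ {1}, r ≥ 0) to (-1)^r f'(W' ∘ A^r), where f' is the projection onto Q·1 + Q⟨A,B⟩·B killing all words ending in A. Then for all words W₁, W₂: ⟨(g₂∘g₁)(W₁), W₂⟩ = ⟨W₁, F'(W₂)⟩, where ⟨·,·⟩ is the inner product making the words an orthonormal basis. -/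
/-- The shuffle-product coefficient: `shc u v w` is the coefficient of the word `w` in the
shuffle product `u ∘ v` (words are lists over `Fin 2`, with `0 = A`, `1 = B`). -/
def shc : List (Fin 2) → List (Fin 2) → List (Fin 2) → ℚ
  | [], v, w => if w = v then 1 else 0
  | u, [], w => if w = u then 1 else 0
  | a :: u, b :: v, [] => 0
  | a :: u, b :: v, c :: w =>
      (if c = a then shc u (b :: v) w else 0) + (if c = b then shc (a :: u) v w else 0)
termination_by u v _ => u.length + v.length

/-- Delete the letters of `W` at the positions in `S`. -/
def removeIdx (W : List (Fin 2)) (S : Finset (Fin W.length)) : List (Fin 2) :=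
  ((List.finRange W.length).filter (fun i => i ∉ S)).map W.get

/-- The coefficient of the word `V` in `(g₂ ∘ g₁)(W)`, where `g₁ : A ↦ A - α, B ↦ B` and
`g₂ : W ⊗ α^q ↦ W·A^q`: each subset `S` of `A`-positions of `W` contributes
`(-1)^{|S|}·(W with S deleted)·A^{|S|}`. -/
def gMap (W V : List (Fin 2)) : ℚ :=
  ∑ S : Finset (Fin W.length),
    if (∀ i ∈ S, W.get i = 0) ∧ V = removeIdx W S ++ List.replicate S.card 0 then
      (-1 : ℚ) ^ S.card else 0

/-- The number of trailing letters `A` of a word. -/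
def trailA (W : List (Fin 2)) : ℕ := (W.reverse.takeWhile (fun x => x == (0 : Fin 2))).length

/-- The coefficient of the word `V` in `F'(W)`: writing `W = W'·A^r` with `W'` empty or
ending in `B`, `F'(W) = (-1)^r f'(W' ∘ A^r)` where `f'` kills all words ending in `A`. -/
def Fdual (W V : List (Fin 2)) : ℚ :=
  if V = [] ∨ V.getLast? = some 1 then
    ((-1 : ℚ) ^ trailA W) *
      shc (W.take (W.length - trailA W)) (List.replicate (trailA W) 0) V
  else 0

/-! ### Auxiliary lemmas -/

section Aux

-- equation lemmas for `shc`
lemma shc_nil_left (v w : List (Fin 2)) : shc [] v w = if w = v then 1 else 0 := by rw [shc]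

lemma shc_cons_nil (a : Fin 2) (u w : List (Fin 2)) :
    shc (a :: u) [] w = if w = a :: u then 1 else 0 := by rw [shc]; simp

lemma shc_ccn (a b : Fin 2) (u v : List (Fin 2)) : shc (a :: u) (b :: v) [] = 0 := by rw [shc]

lemma shc_ccc (a b c : Fin 2) (u v w : List (Fin 2)) :
    shc (a :: u) (b :: v) (c :: w) =
      (if c = a then shc u (b :: v) w else 0) + (if c = b then shc (a :: u) v w else 0) := by
  rw [shc]

lemma shc_nil_right (u v : List (Fin 2)) :
    shc u v [] = if u = [] ∧ v = [] then 1 else 0 := by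
  match u, v with
  | [], v => rw [shc_nil_left]; by_cases h : v = [] <;> simp [h, eq_comm]
  | a :: u, [] => rw [shc_cons_nil]; simp
  | a :: u, b :: v => rw [shc_ccn]; simp

lemma shc_left_nil (u w : List (Fin 2)) : shc u [] w = if w = u then 1 else 0 := by
  cases u with
  | nil => rw [shc_nil_left]
  | cons a u => rw [shc_cons_nil]

/-- The key recursion for `shc W' A^r (a :: U)`. -/
lemma shc_key (b : Fin 2) (W'' : List (Fin 2)) (r : ℕ) (a : Fin 2) (U : List (Fin 2)) :
    shc (b :: W'') (List.replicate r 0) (a :: U) =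
      (if a = b then shc W'' (List.replicate r 0) U else 0) +
        (if a = 0 then
          (if r = 0 then (0 : ℚ) else shc (b :: W'') (List.replicate (r - 1) 0) U)
          else 0) := by
  match r with
  | 0 =>
    rw [List.replicate_zero, shc_cons_nil, shc_left_nil]
    rw [if_pos rfl]
    by_cases hab : a = b
    · subst hab
      by_cases hU : U = W'' <;> by_cases ha0 : a = 0 <;> simp [hU, ha0]
    · have hne : a :: U ≠ b :: W'' := by simp [hab]
      by_cases ha0 : a = 0 <;> simp [hab, hne, ha0, ite_and]
  | r' + 1 =>
    rw [List.replicate_succ, shc_ccc]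
    simp

-- the Finset (Fin (n+1)) ≃ Bool × Finset (Fin n) machinery

def finsetSuccEquiv (n : ℕ) : Bool × Finset (Fin n) ≃ Finset (Fin (n + 1)) where
  toFun := fun p => (if p.1 then {0} else ∅) ∪ p.2.map (Fin.succEmb n)
  invFun := fun T => (decide ((0 : Fin (n + 1)) ∈ T), Finset.univ.filter (fun i => i.succ ∈ T))
  left_inv := by
    rintro ⟨b, S⟩
    have h0 : ∀ (S : Finset (Fin n)), (0 : Fin (n + 1)) ∉ S.map (Fin.succEmb n) := by
      intro S h
      obtain ⟨i, _, hi⟩ := Finset.mem_map.1 h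
      exact (Fin.succ_ne_zero i) hi
    ext
    · cases b <;> simp [h0 S]
    · simp only [Finset.mem_filter, Finset.mem_univ, true_and, Finset.mem_union,
        Finset.mem_map, Fin.succEmb]
      constructor
      · rintro (h | ⟨j, hj, hje⟩)
        · cases b <;> simp_all [Fin.succ_ne_zero]
        · simpa using Fin.succ_injective n hje ▸ hj
      · intro h
        right; exact ⟨_, h, rfl⟩
  right_inv := by
    intro T
    ext j
    refine Fin.cases ?_ ?_ j
    · by_cases h : (0 : Fin (n + 1)) ∈ T <;>
        simp [h, Fin.succ_ne_zero, Finset.mem_map, Fin.succEmb]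
    · intro i
      by_cases h : (0 : Fin (n + 1)) ∈ T <;>
        simp [h, Finset.mem_map, Fin.succEmb, Fin.succ_ne_zero, (Fin.succ_injective n).eq_iff]

lemma sum_finset_succ (n : ℕ) (f : Finset (Fin (n + 1)) → ℚ) :
    ∑ S : Finset (Fin (n + 1)), f S =
      (∑ S : Finset (Fin n), f (S.map (Fin.succEmb n))) +
        ∑ S : Finset (Fin n), f (insert 0 (S.map (Fin.succEmb n))) := by
  rw [← Equiv.sum_comp (finsetSuccEquiv n) f, Fintype.sum_prod_type, Fintype.sum_bool]
  simp only [finsetSuccEquiv, Equiv.coe_fn_mk, Bool.false_eq_true, eq_self_iff_true,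
    if_true, if_false, Finset.insert_eq, Finset.empty_union]
  exact add_comm _ _

lemma zero_not_mem_map (n : ℕ) (S : Finset (Fin n)) :
    (0 : Fin (n + 1)) ∉ S.map (Fin.succEmb n) := by
  intro h
  obtain ⟨i, _, hi⟩ := Finset.mem_map.1 h
  exact (Fin.succ_ne_zero i) hi

lemma mem_map_succ (n : ℕ) (S : Finset (Fin n)) (i : Fin n) :
    i.succ ∈ S.map (Fin.succEmb n) ↔ i ∈ S := by
  simp [Finset.mem_map, Fin.succEmb, (Fin.succ_injective n).eq_iff]

lemma removeIdx_cons_map (a : Fin 2) (U : List (Fin 2)) (S : Finset (Fin U.length)) :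
    removeIdx (a :: U) (S.map (Fin.succEmb U.length)) = a :: removeIdx U S := by
  show List.map (a :: U).get
      (List.filter (fun i => decide (i ∉ Finset.map (Fin.succEmb U.length) S))
        (List.finRange (U.length + 1))) = _
  rw [List.finRange_succ, List.filter_cons]
  simp only [zero_not_mem_map, decide_not, List.filter_map, Function.comp_def,
    mem_map_succ, decide_false, Bool.not_false, if_true, List.map_cons, List.map_map,
    removeIdx]
  rfl

lemma removeIdx_cons_insert (a : Fin 2) (U : List (Fin 2)) (S : Finset (Fin U.length)) :
    removeIdx (a :: U) (insert (0 : Fin (U.length + 1)) (S.map (Fin.succEmb U.length))) = removeIdx U S := by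
  show List.map (a :: U).get
      (List.filter (fun i => decide (i ∉ insert 0 (Finset.map (Fin.succEmb U.length) S)))
        (List.finRange (U.length + 1))) = _
  rw [List.finRange_succ, List.filter_cons]
  simp only [Finset.mem_insert, decide_not, List.filter_map, Function.comp_def,
    mem_map_succ, Fin.succ_ne_zero, false_or, List.map_map, removeIdx,
    eq_self_iff_true, true_or, decide_true, Bool.not_true, Bool.false_eq_true, if_false]
  rfl

lemma gMap_nil (V : List (Fin 2)) : gMap [] V = if V = [] then 1 else 0 := by
  have hS : ∀ S : Finset (Fin (List.length ([] : List (Fin 2)))), S = ∅ := fun S =>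
    Finset.eq_empty_iff_forall_notMem.2 (fun i _ => absurd i.2 (Nat.not_lt_zero _))
  unfold gMap
  rw [Finset.sum_eq_single ∅ (fun b _ hb => absurd (hS b) hb)
      (fun h => absurd (Finset.mem_univ _) h)]
  have : removeIdx ([] : List (Fin 2)) ∅ = [] := rfl
  simp [this]

lemma gMap_cons (a : Fin 2) (U V : List (Fin 2)) :
    gMap (a :: U) V =
      (match V with
        | [] => (0 : ℚ)
        | b :: V' => if b = a then gMap U V' else 0)
      + (if a = 0 ∧ V.getLast? = some (0 : Fin 2) then -gMap U V.dropLast else 0) := by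
  have step := sum_finset_succ U.length (fun S =>
    if (∀ i ∈ S, (a :: U).get i = 0) ∧ V = removeIdx (a :: U) S ++ List.replicate S.card 0 then
      ((-1 : ℚ)) ^ S.card else 0)
  have hdef : gMap (a :: U) V = ∑ S : Finset (Fin (U.length + 1)),
      (if (∀ i ∈ S, (a :: U).get i = 0) ∧
          V = removeIdx (a :: U) S ++ List.replicate S.card 0 then
        ((-1 : ℚ)) ^ S.card else 0) := rfl
  rw [hdef, step]
  congr 1
  · -- subsets avoiding position 0
    have key : ∀ S : Finset (Fin U.length),
        (if (∀ i ∈ S.map (Fin.succEmb U.length), (a :: U).get i = 0) ∧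
            V = removeIdx (a :: U) (S.map (Fin.succEmb U.length)) ++
              List.replicate (S.map (Fin.succEmb U.length)).card 0
          then ((-1 : ℚ)) ^ (S.map (Fin.succEmb U.length)).card else 0)
        = (if ((∀ i ∈ S, U.get i = 0) ∧
              V = a :: (removeIdx U S ++ List.replicate S.card 0)) then
            ((-1 : ℚ)) ^ S.card else 0) := by
      intro S
      rw [Finset.card_map, removeIdx_cons_map]
      refine if_congr (and_congr ?_ (by rw [List.cons_append])) rfl rfl
      constructor
      · intro h i hi
        exact h i.succ ((mem_map_succ _ _ _).2 hi)
      · intro h i hi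
        obtain ⟨j, hj, rfl⟩ := Finset.mem_map.1 hi
        exact h j hj
    rw [Finset.sum_congr rfl (fun S _ => key S)]
    cases V with
    | nil =>
      refine Finset.sum_eq_zero fun S _ => ?_
      rw [if_neg]
      rintro ⟨-, h⟩
      exact nomatch h
    | cons b V' =>
      show _ = if b = a then gMap U V' else 0
      by_cases hba : b = a
      · subst hba
        rw [if_pos rfl]
        unfold gMap
        refine Finset.sum_congr rfl fun S _ => if_congr (and_congr Iff.rfl ?_) rfl rfl
        simp
      · rw [if_neg hba]
        refine Finset.sum_eq_zero fun S _ => ?_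
        rw [if_neg]
        rintro ⟨-, h⟩
        exact hba (by injection h)
  · -- subsets containing position 0
    have key2 : ∀ S : Finset (Fin U.length),
        (if (∀ i ∈ insert (0 : Fin (U.length + 1)) (S.map (Fin.succEmb U.length)), (a :: U).get i = 0) ∧
            V = removeIdx (a :: U) (insert (0 : Fin (U.length + 1)) (S.map (Fin.succEmb U.length))) ++
              List.replicate (insert (0 : Fin (U.length + 1)) (S.map (Fin.succEmb U.length))).card 0
          then ((-1 : ℚ)) ^ (insert (0 : Fin (U.length + 1)) (S.map (Fin.succEmb U.length))).card else 0)
        = (if (a = 0 ∧ (∀ i ∈ S, U.get i = 0) ∧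
              V = (removeIdx U S ++ List.replicate S.card 0) ++ [0]) then
            -((-1 : ℚ)) ^ S.card else 0) := by
      intro S
      rw [Finset.card_insert_of_notMem (zero_not_mem_map _ _), Finset.card_map,
        removeIdx_cons_insert, List.replicate_succ', ← List.append_assoc, pow_succ]
      refine if_congr ?_ (by ring) rfl
      rw [Finset.forall_mem_insert]
      constructor
      · rintro ⟨⟨ha, hS⟩, hV⟩
        refine ⟨ha, fun i hi => ?_, hV⟩
        exact hS i.succ ((mem_map_succ _ _ _).2 hi)
      · rintro ⟨ha, hS, hV⟩
        refine ⟨⟨ha, fun i hi => ?_⟩, hV⟩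
        obtain ⟨j, hj, rfl⟩ := Finset.mem_map.1 hi
        exact hS j hj
    rw [Finset.sum_congr rfl (fun S _ => key2 S)]
    by_cases hV : a = 0 ∧ V.getLast? = some (0 : Fin 2)
    · obtain ⟨ha, hV0⟩ := hV
      rw [if_pos ⟨ha, hV0⟩]
      have hVne : V ≠ [] := by
        intro h; rw [h] at hV0; simp at hV0
      have hlast : V.getLast hVne = 0 := by
        have := List.getLast?_eq_getLast hVne
        rw [hV0] at this
        exact (Option.some_injective _ this).symm
      have hdV : V.dropLast ++ [(0 : Fin 2)] = V := by
        conv_rhs => rw [← List.dropLast_append_getLast hVne]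
        rw [hlast]
      unfold gMap
      rw [← Finset.sum_neg_distrib]
      refine Finset.sum_congr rfl fun S _ => ?_
      rw [apply_ite (fun x : ℚ => -x), neg_zero]
      refine if_congr ?_ rfl rfl
      constructor
      · rintro ⟨-, hS, hV⟩
        refine ⟨hS, ?_⟩
        have : V.dropLast ++ [(0 : Fin 2)] =
            (removeIdx U S ++ List.replicate S.card 0) ++ [0] := by rw [hdV, hV]
        exact List.append_left_injective _ this
      · rintro ⟨hS, hV⟩
        exact ⟨ha, hS, by rw [← hdV, hV]⟩
    · rw [if_neg hV]
      refine Finset.sum_eq_zero fun S _ => ?_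
      rw [if_neg]
      rintro ⟨ha, -, hVc⟩
      exact hV ⟨ha, by rw [hVc, List.getLast?_concat]⟩

end Aux

section Aux2

lemma trailA_decomp (W' : List (Fin 2)) (r : ℕ) (h : W' = [] ∨ W'.getLast? = some 1) :
    trailA (W' ++ List.replicate r 0) = r := by
  unfold trailA
  have h1 : List.takeWhile (fun x => x == (0 : Fin 2)) (List.replicate r 0)
      = List.replicate r 0 := by
    rw [List.takeWhile_replicate]; simp
  have h2 : List.takeWhile (fun x => x == (0 : Fin 2)) W'.reverse = [] := by
    rcases h with h | h
    · subst h; rfl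
    · have hh : W'.reverse.head? = some 1 := by rw [List.head?_reverse]; exact h
      cases hrev : W'.reverse with
      | nil => rfl
      | cons x t =>
        rw [hrev] at hh
        have hx : x = 1 := by simpa using hh
        subst hx
        exact List.takeWhile_cons_of_neg (by decide)
    
  rw [List.reverse_append, List.reverse_replicate, List.takeWhile_append, h1, if_pos rfl, h2]
  simp

lemma take_decomp (W' : List (Fin 2)) (r : ℕ) :
    (W' ++ List.replicate r 0).take ((W' ++ List.replicate r 0).length - r) = W' := by
  rw [List.length_append, List.length_replicate, Nat.add_sub_cancel, List.take_left]

lemma Fdual_decomp (W' : List (Fin 2)) (r : ℕ) (h : W' = [] ∨ W'.getLast? = some 1)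
    (V : List (Fin 2)) :
    Fdual (W' ++ List.replicate r 0) V =
      if V = [] ∨ V.getLast? = some 1 then
        ((-1 : ℚ)) ^ r * shc W' (List.replicate r 0) V else 0 := by
  unfold Fdual
  rw [trailA_decomp W' r h, take_decomp]

lemma decomp (W : List (Fin 2)) :
    ∃ W' r, (W' = [] ∨ W'.getLast? = some 1) ∧ W = W' ++ List.replicate r 0 := by
  induction W using List.reverseRecOn with
  | nil => exact ⟨[], 0, Or.inl rfl, rfl⟩
  | append_singleton X c IH =>
    obtain ⟨W', r, hP, hX⟩ := IH
    rcases (show c = 0 ∨ c = 1 by revert c; decide) with hc | hc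
    · subst hc
      exact ⟨W', r + 1, hP, by rw [hX, List.replicate_succ', ← List.append_assoc]⟩
    · subst hc
      exact ⟨X ++ [1], 0, Or.inr List.getLast?_concat, by simp⟩

lemma Fdual_nil_right (W : List (Fin 2)) : Fdual W [] = if W = [] then 1 else 0 := by
  obtain ⟨W', r, hP, rfl⟩ := decomp W
  rw [Fdual_decomp W' r hP, if_pos (Or.inl rfl), shc_nil_right]
  by_cases h1 : W' = []
  · subst h1
    cases r with
    | zero => simp
    | succ r' => simp [List.replicate_succ]
  · have h2 : W' ++ List.replicate r 0 ≠ [] := by simp [h1]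
    simp [h1, h2]

end Aux2

section Aux3

lemma Fdual_cons (a : Fin 2) (U W : List (Fin 2)) :
    Fdual W (a :: U) =
      (match W with
        | [] => (0 : ℚ)
        | b :: T => if b = a then Fdual T U else 0)
      + (if a = 0 ∧ W.getLast? = some (0 : Fin 2) then -Fdual W.dropLast U else 0) := by
  obtain ⟨W', r, hP, rfl⟩ := decomp W
  cases W' with
  | nil =>
    cases r with
    | zero =>
      rw [Fdual_decomp [] 0 (Or.inl rfl)]
      simp [shc_nil_left]
    | succ r' =>
      have hL : Fdual ([] ++ List.replicate (r' + 1) 0) (a :: U) = 0 := by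
        rw [Fdual_decomp [] (r' + 1) (Or.inl rfl), shc_nil_left]
        rcases eq_or_ne (a :: U) (List.replicate (r' + 1) (0 : Fin 2)) with he | he
        · rw [he]
          have hnc : ¬(List.replicate (r' + 1) (0 : Fin 2) = [] ∨
              (List.replicate (r' + 1) (0 : Fin 2)).getLast? = some 1) := by
            simp [List.getLast?_replicate]
          rw [if_neg hnc]
        · rw [if_neg he, mul_zero, ite_self]
      rw [hL]
      have h2 : (([] : List (Fin 2)) ++ List.replicate (r' + 1) 0).getLast? = some 0 := by
        simp [List.getLast?_replicate]
      have h3 : (([] : List (Fin 2)) ++ List.replicate (r' + 1) 0).dropLast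
          = List.replicate r' 0 := by
        simp [List.replicate_succ', List.dropLast_concat]
      have e : Fdual (List.replicate r' 0) U =
          if U = [] ∨ U.getLast? = some 1 then
            ((-1 : ℚ)) ^ r' * shc [] (List.replicate r' 0) U else 0 := by
        have := Fdual_decomp [] r' (Or.inl rfl) U
        simpa using this
      show (0 : ℚ) = (if (0 : Fin 2) = a then Fdual (List.replicate r' 0) U else 0) + _
      rw [h2, h3]
      rcases eq_or_ne a 0 with ha | ha
      · subst ha
        simp
      · rw [if_neg (fun h => ha h.symm), if_neg (by simp [ha]), add_zero]
  | cons b W'' =>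
    replace hP : (b :: W'').getLast? = some 1 := by
      rcases hP with h | h
      · exact absurd h (List.cons_ne_nil _ _)
      · exact h
    have hP'' : W'' = [] ∨ W''.getLast? = some 1 := by
      cases W'' with
      | nil => exact Or.inl rfl
      | cons c t => exact Or.inr (by rw [← List.getLast?_cons_cons (a := b)]; exact hP)
    have hb1 : W'' = [] → b = 1 := by
      intro h; subst h; simpa using hP
    have hba : ((b = a) ↔ (a = b)) := eq_comm
    rw [Fdual_decomp (b :: W'') r (Or.inr hP)]
    show _ = (if b = a then Fdual (W'' ++ List.replicate r 0) U else 0) + _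
    cases U with
    | nil =>
      cases r with
      | zero =>
        have hlast : ((b :: W'') ++ List.replicate 0 0 : List (Fin 2)).getLast? = some 1 := by
          simpa using hP
        rw [hlast]
        have hno : ¬(a = 0 ∧ some (1 : Fin 2) = some 0) := by
          rintro ⟨-, h⟩; exact absurd h (by decide)
        rw [if_neg hno, add_zero, Fdual_nil_right]
        simp only [List.replicate_zero, List.append_nil]
        rw [shc_cons_nil]
        by_cases hW : W'' = []
        · subst hW
          have hb := hb1 rfl
          subst hb
          rcases (show a = 0 ∨ a = 1 by revert a; decide) with ha | ha <;> subst ha <;> simp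
        · have h1 : ([a] : List (Fin 2)) ≠ b :: W'' := by
            intro h; injection h with _ h2; exact hW h2.symm
          simp [h1, hW]
      | succ r'' =>
        have hlast : ((b :: W'') ++ List.replicate (r'' + 1) 0 : List (Fin 2)).getLast?
            = some 0 := by
          rw [List.replicate_succ', ← List.append_assoc, List.getLast?_concat]
        have hdrop : ((b :: W'') ++ List.replicate (r'' + 1) 0 : List (Fin 2)).dropLast
            = (b :: W'') ++ List.replicate r'' 0 := by
          rw [List.replicate_succ', ← List.append_assoc, List.dropLast_concat]
        rw [hlast, hdrop, Fdual_nil_right, Fdual_nil_right]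
        have hne1 : (b :: W'') ++ List.replicate r'' 0 ≠ [] := by simp
        have hne2 : W'' ++ List.replicate (r'' + 1) 0 ≠ [] := by simp
        rw [if_neg hne1, if_neg hne2, shc_key]
        have hz : shc W'' (List.replicate (r'' + 1) 0) [] = 0 := by
          rw [shc_nil_right, if_neg (by simp)]
        have hz2 : shc (b :: W'') (List.replicate (r'' + 1 - 1) 0) [] = 0 := by
          rw [shc_nil_right, if_neg (by simp)]
        rw [hz, hz2]
        simp
    | cons u U' =>
      have hgl : (a :: u :: U').getLast? = (u :: U').getLast? := List.getLast?_cons_cons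
      by_cases hcond : (u :: U').getLast? = some (1 : Fin 2)
      · -- cond holds
        rw [if_pos (Or.inr (by rw [hgl]; exact hcond)), shc_key,
          Fdual_decomp W'' r hP'', if_pos (Or.inr hcond)]
        cases r with
        | zero =>
          have hlast : ((b :: W'') ++ List.replicate 0 0 : List (Fin 2)).getLast? = some 1 := by
            simpa using hP
          rw [hlast]
          have hno : ¬(a = 0 ∧ some (1 : Fin 2) = some 0) := by
            rintro ⟨-, h⟩; exact absurd h (by decide)
          rw [if_neg hno, add_zero, if_pos rfl]
          by_cases hab : a = b
          · rw [if_pos hab, if_pos (hba.2 hab)]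
            simp
          · rw [if_neg hab, if_neg (fun h => hab (hba.1 h))]
            simp
        | succ r'' =>
          have hlast : ((b :: W'') ++ List.replicate (r'' + 1) 0 : List (Fin 2)).getLast?
              = some 0 := by
            rw [List.replicate_succ', ← List.append_assoc, List.getLast?_concat]
          have hdrop : ((b :: W'') ++ List.replicate (r'' + 1) 0 : List (Fin 2)).dropLast
              = (b :: W'') ++ List.replicate r'' 0 := by
            rw [List.replicate_succ', ← List.append_assoc, List.dropLast_concat]
          rw [hlast, hdrop, Fdual_decomp (b :: W'') r'' (Or.inr hP), if_pos (Or.inr hcond)]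
          rw [if_neg (Nat.succ_ne_zero r''), Nat.add_sub_cancel]
          simp only [eq_self_iff_true, and_true]
          by_cases hab : a = b
          · subst hab
            rw [if_pos rfl, if_pos rfl]
            by_cases ha0 : a = 0 <;> simp [ha0] <;> ring
          · have hba' : ¬(b = a) := fun h => hab h.symm
            rw [if_neg hab, if_neg hba']
            by_cases ha0 : a = 0 <;> simp [ha0] <;> ring
      · -- cond fails : everything vanishes
        have hnc : ¬(a :: u :: U' = [] ∨ (a :: u :: U').getLast? = some 1) := by
          rw [hgl]
          push_neg
          exact ⟨List.cons_ne_nil _ _, hcond⟩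
        have hnc' : ¬(u :: U' = [] ∨ (u :: U').getLast? = some 1) := by
          push_neg
          exact ⟨List.cons_ne_nil _ _, hcond⟩
        rw [if_neg hnc]
        have hz1 : Fdual (W'' ++ List.replicate r 0) (u :: U') = 0 := by
          rw [Fdual_decomp W'' r hP'', if_neg hnc']
        rw [hz1]
        cases r with
        | zero =>
          have hlast : ((b :: W'') ++ List.replicate 0 0 : List (Fin 2)).getLast? = some 1 := by
            simpa using hP
          rw [hlast]
          simp
        | succ r'' =>
          have hdrop : ((b :: W'') ++ List.replicate (r'' + 1) 0 : List (Fin 2)).dropLast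
              = (b :: W'') ++ List.replicate r'' 0 := by
            rw [List.replicate_succ', ← List.append_assoc, List.dropLast_concat]
          rw [hdrop]
          have hz2 : Fdual ((b :: W'') ++ List.replicate r'' 0) (u :: U') = 0 := by
            rw [Fdual_decomp (b :: W'') r'' (Or.inr hP), if_neg hnc']
          rw [hz2]
          simp

end Aux3

/-- `F'` is the transpose of `g₂ ∘ g₁` with respect to the inner product
making the words an orthonormal basis: `⟨(g₂∘g₁)(W₁), W₂⟩ = ⟨W₁, F'(W₂)⟩`. -/
theorem gMap_transpose_Fdual : ∀ W₁ W₂ : List (Fin 2), gMap W₁ W₂ = Fdual W₂ W₁ := by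
  intro W₁
  induction W₁ with
  | nil =>
    intro W₂
    rw [gMap_nil, Fdual_nil_right]
  | cons a U IH =>
    intro W₂
    rw [gMap_cons, Fdual_cons]
    congr 1
    · cases W₂ with
      | nil => rfl
      | cons b T => show (if b = a then gMap U T else 0) = _; rw [IH T]
    · rw [IH]
end
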